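/- arXiv:2109.07275 — 2 statements merged into one kernel-verified Lean document; each statement's English description precedes it below -/
import Mathlib

section
/- Let Z be a bounded random variable with distribution μ on a finite sample space of size n, and let s² = E_μ[Z²]. Then for any α > 0, the supremum of E_{μ̂}[Z] over all distributions μ̂ with χ²-divergence χ²(μ̂ ‖ μ) ≤ α/n is at most E_μ[Z] + sqrt((α/n) · s²). -/
open Finset

/-- Duchi et al. variance bound: for any distribution `μ̂` on `Fin n` with
`χ²(μ̂‖μ) ≤ α/n` (and absolutely continuous w.r.t. `μ`), the expectation of a
bounded variable `Z` under `μ̂` is at most `E_μ[Z] + √((α/n)·E_μ[Z²])`. -/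
theorem dro_variance_bound (n : ℕ) (hn : 0 < n)
    (μ μhat : Fin n → ℝ) (Z : Fin n → ℝ) (α : ℝ) (hα : 0 < α)
    (hμpos : ∀ i, 0 ≤ μ i) (hμsum : ∑ i, μ i = 1)
    (hhatpos : ∀ i, 0 ≤ μhat i) (hhatsum : ∑ i, μhat i = 1)
    (habs : ∀ i, μ i = 0 → μhat i = 0)
    (hchi : ∑ i ∈ Finset.univ.filter (fun i => μ i ≠ 0),
        (μhat i - μ i) ^ 2 / μ i ≤ α / n) :
    ∑ i, μhat i * Z i ≤ ∑ i, μ i * Z i +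
      Real.sqrt ((α / n) * ∑ i, μ i * (Z i) ^ 2) := by
  set S := Finset.univ.filter (fun i => μ i ≠ 0) with hS
  set f : Fin n → ℝ := fun i => (μhat i - μ i) / Real.sqrt (μ i) with hf
  set g : Fin n → ℝ := fun i => Real.sqrt (μ i) * Z i with hg
  have hdiff : ∑ i, μhat i * Z i - ∑ i, μ i * Z i = ∑ i ∈ S, f i * g i := by
    rw [← Finset.sum_sub_distrib]
    rw [← Finset.sum_subset (Finset.filter_subset _ Finset.univ)
      (fun i _ hi => by
        have hμ : μ i = 0 := by
          by_contra h
          exact hi (Finset.mem_filter.mpr ⟨Finset.mem_univ i, h⟩)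
        simp [hμ, habs i hμ])]
    apply Finset.sum_congr rfl
    intro i hi
    have hμ : μ i ≠ 0 := (Finset.mem_filter.mp hi).2
    have hμpos' : 0 < μ i := lt_of_le_of_ne (hμpos i) (Ne.symm hμ)
    have hsq : Real.sqrt (μ i) ≠ 0 := by positivity
    simp only [hf, hg]
    rw [div_mul_eq_mul_div, eq_div_iff hsq]
    have h2 : Real.sqrt (μ i) * Real.sqrt (μ i) = μ i := Real.mul_self_sqrt (hμpos i)
    nlinarith [h2]
  have hf2 : ∑ i ∈ S, f i ^ 2 = ∑ i ∈ S, (μhat i - μ i) ^ 2 / μ i := by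
    apply Finset.sum_congr rfl
    intro i hi
    simp only [hf, div_pow, Real.sq_sqrt (hμpos i)]
  have hg2 : ∑ i ∈ S, g i ^ 2 ≤ ∑ i, μ i * Z i ^ 2 := by
    have h1 : ∑ i ∈ S, g i ^ 2 = ∑ i ∈ S, μ i * Z i ^ 2 :=
      Finset.sum_congr rfl fun i _ => by
        simp [hg, mul_pow, Real.sq_sqrt (hμpos i)]
    rw [h1]
    exact Finset.sum_le_sum_of_subset_of_nonneg (Finset.filter_subset _ _)
      (fun i _ _ => mul_nonneg (hμpos i) (sq_nonneg _))
  have hg2nn : 0 ≤ ∑ i, μ i * Z i ^ 2 :=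
    Finset.sum_nonneg fun i _ => mul_nonneg (hμpos i) (sq_nonneg _)
  have hcs : ∑ i ∈ S, f i * g i ≤
      Real.sqrt (∑ i ∈ S, f i ^ 2) * Real.sqrt (∑ i ∈ S, g i ^ 2) :=
    Real.sum_mul_le_sqrt_mul_sqrt S f g
  have hbound : Real.sqrt (∑ i ∈ S, f i ^ 2) * Real.sqrt (∑ i ∈ S, g i ^ 2) ≤
      Real.sqrt ((α / n) * ∑ i, μ i * Z i ^ 2) := by
    rw [← Real.sqrt_mul (Finset.sum_nonneg fun i _ => sq_nonneg _)]
    apply Real.sqrt_le_sqrt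
    apply mul_le_mul (hf2 ▸ hchi) hg2 (Finset.sum_nonneg fun i _ => sq_nonneg _)
    positivity
  linarith
end

section
/- Let ρ(s,a) = ρ(s)π(a|s) be a probability distribution on a finite S × A, with d^β a state distribution with full support, π^f = fπ^β + (1−f)π an interpolated policy, and suppose the variance Var_{π^f}(Q(s,·)) ≥ 1/κ for all s, with κ > 0. Then Σ_{s,a} ρ(s)π(a|s)·α(1−π^f(a|s)) / √(Var_{π^f}(Q(s,·))·N·d^β(s)) ≤ α·(1 − ‖π‖₂² + f·D_TV(π,π^β)) · √(κ·|S|·(D_CQL(ρ,d^β)+1)/N), where D_TV(π,π^β) = max_s Σ_a |π(a|s)−π^β(a|s)| and D_CQL(ρ,d^β) = Σ_s ρ(s)²/d^β(s) − 1. -/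
open Finset

/-- Bound on the variance-penalty expectation (Lemma `bound-c` of DROMO):
`E_ρ[λ_{α,π,f}/√(Var·|D(s)|)] ≤ α(1-‖π‖₂²+f·D_TV(π,π^β))·√(κ|S|(D_CQL+1)/N)`. -/
theorem dromo_penalty_expectation_bound
    {S A : Type*} [Fintype S] [Fintype A] [Nonempty S]
    (ρs dβ : S → ℝ) (π πβ : S → A → ℝ) (Q : S → A → ℝ)
    (f α N κ : ℝ)
    (hf0 : 0 ≤ f) (hf1 : f ≤ 1) (hα : 0 ≤ α) (hN : 0 < N) (hκ : 0 < κ)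
    (hρs : ∀ s, 0 ≤ ρs s) (hρsum : ∑ s, ρs s = 1)
    (hdβ : ∀ s, 0 < dβ s) (hdβsum : ∑ s, dβ s = 1)
    (hπ : ∀ s a, 0 ≤ π s a) (hπsum : ∀ s, ∑ a, π s a = 1)
    (hπβ : ∀ s a, 0 ≤ πβ s a) (hπβsum : ∀ s, ∑ a, πβ s a = 1)
    -- interpolated policy and its variance of Q(s,·), lower bounded by 1/κ
    (πf : S → A → ℝ) (hπf : ∀ s a, πf s a = f * πβ s a + (1 - f) * π s a)
    (Var : S → ℝ)
    (hVar : ∀ s, Var s = ∑ a, πf s a * (Q s a - ∑ a', πf s a' * Q s a') ^ 2)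
    (hVarLB : ∀ s, 1 / κ ≤ Var s)
    -- ‖π‖₂² is the minimal (over states) squared ℓ2-norm of π(·|s)
    (πnorm2 : ℝ) (hπnorm2 : ∀ s, πnorm2 ≤ ∑ a, (π s a) ^ 2)
    -- total-variation term: maximum over states of the ℓ1 distance
    (DTV : ℝ)
    (hDTV : DTV = Finset.univ.sup' Finset.univ_nonempty
      (fun s => ∑ a, |π s a - πβ s a|)) :
    ∑ s, ∑ a, ρs s * π s a * (α * (1 - πf s a)) /
        Real.sqrt (Var s * N * dβ s) ≤
      α * (1 - πnorm2 + f * DTV) *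
        Real.sqrt (κ * (Fintype.card S : ℝ) *
          ((∑ s, (ρs s) ^ 2 / dβ s - 1) + 1) / N) := by
  have hπle1 : ∀ s a, π s a ≤ 1 := fun s a => by
    have := Finset.single_le_sum (fun a' _ => hπ s a') (mem_univ a)
    simpa [hπsum s] using this
  have hπβle1 : ∀ s a, πβ s a ≤ 1 := fun s a => by
    have := Finset.single_le_sum (fun a' _ => hπβ s a') (mem_univ a)
    simpa [hπβsum s] using this
  have hπf1 : ∀ s a, πf s a ≤ 1 := fun s a => by
    rw [hπf]
    nlinarith [hπβle1 s a, hπle1 s a, hπ s a, hπβ s a]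
  have hπf0 : ∀ s a, 0 ≤ πf s a := fun s a => by
    rw [hπf]
    nlinarith [hπ s a, hπβ s a]
  have hVarpos : ∀ s, 0 < Var s := fun s =>
    lt_of_lt_of_le (by positivity) (hVarLB s)
  set s₀ : S := Classical.arbitrary S
  have hDTVge : ∀ s, ∑ a, |π s a - πβ s a| ≤ DTV := fun s => by
    rw [hDTV]
    exact Finset.le_sup' (fun s => ∑ a, |π s a - πβ s a|) (mem_univ s)
  have hDTV0 : 0 ≤ DTV :=
    le_trans (Finset.sum_nonneg fun a _ => abs_nonneg _) (hDTVge s₀)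
  have hπnorm2le1 : πnorm2 ≤ 1 := by
    refine le_trans (hπnorm2 s₀) ?_
    calc ∑ a, (π s₀ a) ^ 2 ≤ ∑ a, π s₀ a :=
          Finset.sum_le_sum fun a _ => by nlinarith [hπ s₀ a, hπle1 s₀ a]
      _ = 1 := hπsum s₀
  have hC : 0 ≤ 1 - πnorm2 + f * DTV := by nlinarith
  -- per-state bound on the action sum
  have hstate : ∀ s, ∑ a, π s a * (1 - πf s a) ≤ 1 - πnorm2 + f * DTV := by
    intro s
    have h1 : ∑ a, π s a * (1 - πf s a)
        = 1 - ∑ a, (π s a) ^ 2 + f * ∑ a, π s a * (π s a - πβ s a) := by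
      rw [Finset.sum_congr rfl (fun a _ => by rw [hπf s a]; ring :
        ∀ a ∈ univ, π s a * (1 - πf s a)
          = π s a - (π s a) ^ 2 + f * (π s a * (π s a - πβ s a)))]
      rw [Finset.sum_add_distrib, Finset.sum_sub_distrib, hπsum s, ← Finset.mul_sum]
    rw [h1]
    have h2 : ∑ a, π s a * (π s a - πβ s a) ≤ DTV := by
      refine le_trans (Finset.sum_le_sum fun a _ => ?_) (hDTVge s)
      nlinarith [le_abs_self (π s a - πβ s a), hπ s a, hπle1 s a,
        abs_nonneg (π s a - πβ s a)]
    nlinarith [hπnorm2 s]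
  -- rewrite LHS, factoring over actions
  have hLHS : ∑ s, ∑ a, ρs s * π s a * (α * (1 - πf s a)) /
        Real.sqrt (Var s * N * dβ s)
      = ∑ s, (∑ a, π s a * (1 - πf s a)) *
          (α * ρs s / Real.sqrt (Var s * N * dβ s)) := by
    refine Finset.sum_congr rfl fun s _ => ?_
    rw [Finset.sum_mul]
    refine Finset.sum_congr rfl fun a _ => ?_
    rw [div_eq_mul_inv, div_eq_mul_inv]
    ring
  rw [hLHS]
  have hcoef : ∀ s, 0 ≤ α * ρs s / Real.sqrt (Var s * N * dβ s) := fun s =>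
    div_nonneg (mul_nonneg hα (hρs s)) (Real.sqrt_nonneg _)
  have step1 : ∑ s, (∑ a, π s a * (1 - πf s a)) *
        (α * ρs s / Real.sqrt (Var s * N * dβ s))
      ≤ (1 - πnorm2 + f * DTV) * ∑ s, α * ρs s / Real.sqrt (Var s * N * dβ s) := by
    rw [Finset.mul_sum]
    exact Finset.sum_le_sum fun s _ =>
      mul_le_mul_of_nonneg_right (hstate s) (hcoef s)
  refine le_trans step1 ?_
  -- now bound ∑ ρ/√(Var N dβ) via Cauchy-Schwarz
  have key : ∑ s, ρs s / Real.sqrt (Var s * N * dβ s)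
      ≤ Real.sqrt (κ * (Fintype.card S : ℝ) * (∑ s, (ρs s) ^ 2 / dβ s) / N) := by
    have hxy : ∀ s : S, ρs s / Real.sqrt (Var s * N * dβ s)
        = (ρs s / Real.sqrt (dβ s)) * (1 / Real.sqrt (Var s * N)) := by
      intro s
      rw [Real.sqrt_mul (mul_pos (hVarpos s) hN).le]
      ring
    rw [Finset.sum_congr rfl fun s _ => hxy s]
    have hcs := Finset.sum_mul_sq_le_sq_mul_sq Finset.univ
      (fun s => ρs s / Real.sqrt (dβ s)) (fun s => 1 / Real.sqrt (Var s * N))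
    have hx2 : ∑ s, (ρs s / Real.sqrt (dβ s)) ^ 2 = ∑ s, (ρs s) ^ 2 / dβ s := by
      refine Finset.sum_congr rfl fun s _ => ?_
      rw [div_pow, Real.sq_sqrt (hdβ s).le]
    have hy2 : ∑ s, (1 / Real.sqrt (Var s * N)) ^ 2
        ≤ (Fintype.card S : ℝ) * (κ / N) := by
      have : ∀ s : S, (1 / Real.sqrt (Var s * N)) ^ 2 ≤ κ / N := by
        intro s
        rw [div_pow, Real.sq_sqrt (mul_pos (hVarpos s) hN).le, one_pow]
        rw [div_le_div_iff₀ (mul_pos (hVarpos s) hN) hN]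
        have h := hVarLB s
        rw [div_le_iff₀ hκ] at h
        nlinarith
      calc ∑ s, (1 / Real.sqrt (Var s * N)) ^ 2
          ≤ ∑ _s : S, κ / N := Finset.sum_le_sum fun s _ => this s
        _ = (Fintype.card S : ℝ) * (κ / N) := by
            rw [Finset.sum_const, nsmul_eq_mul, Finset.card_univ]
    have hsum0 : 0 ≤ ∑ s, (ρs s / Real.sqrt (dβ s)) * (1 / Real.sqrt (Var s * N)) :=
      Finset.sum_nonneg fun s _ => mul_nonneg
        (div_nonneg (hρs s) (Real.sqrt_nonneg _)) (by positivity)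
    have hx2nn : 0 ≤ ∑ s, (ρs s) ^ 2 / dβ s :=
      Finset.sum_nonneg fun s _ => div_nonneg (sq_nonneg _) (hdβ s).le
    rw [show κ * (Fintype.card S : ℝ) * (∑ s, (ρs s) ^ 2 / dβ s) / N
        = (∑ s, (ρs s) ^ 2 / dβ s) * ((Fintype.card S : ℝ) * (κ / N)) by ring,
      Real.le_sqrt hsum0 (mul_nonneg hx2nn (by positivity))]
    refine le_trans hcs ?_
    rw [hx2]
    exact mul_le_mul_of_nonneg_left hy2 hx2nn
  have hsimp : (∑ s, (ρs s) ^ 2 / dβ s - 1) + 1 = ∑ s, (ρs s) ^ 2 / dβ s := by ring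
  rw [hsimp]
  have hsums : ∑ s, α * ρs s / Real.sqrt (Var s * N * dβ s)
      = α * ∑ s, ρs s / Real.sqrt (Var s * N * dβ s) := by
    rw [Finset.mul_sum]
    exact Finset.sum_congr rfl fun s _ => by ring
  rw [hsums, show α * (1 - πnorm2 + f * DTV) *
      Real.sqrt (κ * (Fintype.card S : ℝ) * (∑ s, (ρs s) ^ 2 / dβ s) / N)
    = (1 - πnorm2 + f * DTV) * (α *
      Real.sqrt (κ * (Fintype.card S : ℝ) * (∑ s, (ρs s) ^ 2 / dβ s) / N)) by ring]
  exact mul_le_mul_of_nonneg_left (mul_le_mul_of_nonneg_left key hα) hC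
end
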